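/- arXiv:2007.05601 — 4 statements merged into one kernel-verified Lean document; each statement's English description precedes it below -/
import Mathlib

section
/- Let E be a complex Banach space, V a finite-dimensional real normed vector space, C > 0 and d > 0. For each s ∈ H_{>C} let Z_s : E → ℂ be a continuous linear functional, and assume that for every v ∈ E the function s ↦ Z_s(v) is holomorphic on H_{>C} and of order at most d in vertical strips. Then for every E-valued Schwartz function f ∈ 𝒮(V, E) and every s ∈ H_{>C}, the function λ ∈ V ↦ Z_s(f(λ)) belongs to 𝒮(V), and the map s ∈ H_{>C} ↦ (λ ↦ Z_s(f(λ))) ∈ 𝒮(V) is holomorphic and of finite order in vertical strips. -/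
/-!
Banach–Steinhaus makes the family `s ↦ Z s` of functionals locally bounded in operator norm, so
the Schwarz lemma applied to every `s ↦ Z s v` makes it locally Lipschitz, hence norm-continuous.
Its Cauchy integral is then an analytic `E'`-valued function which agrees with `Z` after
evaluation at every `v`, so `Z` is holomorphic in norm. Postcomposition `T ↦ T ∘ f` is a
continuous linear map `E' → 𝒮(V)` with `p_{k,n}(T ∘ f) ≤ ‖T‖ p_{k,n}(f)`; it carries holomorphy of
`Z` over to `s ↦ Z s ∘ f`, and Banach–Steinhaus applied to `exp (-|s| ^ d') • Z s` on a vertical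
strip bounds its seminorms.
-/

noncomputable section

/-- A scalar function `φ : ℂ → ℂ` is of order at most `d` in vertical strips of `D`:
for every `d' > d`, `z ↦ exp (-|z| ^ d') * |φ z|` is bounded on every vertical strip
`{z | a ≤ Re z ≤ b}` intersected with `D`. -/
def OrderAtMostOn (D : Set ℂ) (φ : ℂ → ℂ) (d : ℝ) : Prop :=
  ∀ d' : ℝ, d < d' → ∀ a b : ℝ, ∃ M : ℝ, ∀ z ∈ D, a ≤ z.re → z.re ≤ b →
    Real.exp (-(‖z‖ ^ d')) * ‖φ z‖ ≤ M

/-- A map `Z` from `D ⊆ ℂ` to the Schwartz space `𝒮(V)` is of finite order in vertical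
strips of `D`: there is `d > 0` such that for every `d' > d` and every Schwartz seminorm
`p_{k,n}`, `s ↦ exp (-|s| ^ d') * p_{k,n} (Z s)` is bounded in vertical strips of `D`. -/
def SchwartzFiniteOrderOn {V : Type*} [NormedAddCommGroup V] [NormedSpace ℝ V]
    (D : Set ℂ) (Z : ℂ → SchwartzMap V ℂ) : Prop :=
  ∃ d : ℝ, 0 < d ∧ ∀ d' : ℝ, d < d' → ∀ k n : ℕ, ∀ a b : ℝ, ∃ M : ℝ,
    ∀ s ∈ D, a ≤ s.re → s.re ≤ b →
      Real.exp (-(‖s‖ ^ d')) * SchwartzMap.seminorm ℝ k n (Z s) ≤ M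

open Metric Set ContinuousLinearMap
open scoped NNReal SchwartzMap

namespace SchwartzMap

variable {𝕜 E F G : Type*} [RCLike 𝕜]
  [NormedAddCommGroup E] [NormedSpace ℝ E]
  [NormedAddCommGroup F] [NormedSpace ℝ F] [NormedSpace 𝕜 F]
  [NormedAddCommGroup G] [NormedSpace ℝ G] [NormedSpace 𝕜 G]

theorem seminorm_postcompCLM_le (L : F →L[𝕜] G) (f : 𝓢(E, F)) (k n : ℕ) :
    SchwartzMap.seminorm ℝ k n (f.postcompCLM L) ≤ ‖L‖ * SchwartzMap.seminorm ℝ k n f := by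
  refine seminorm_le_bound ℝ k n _ (by positivity) fun x => ?_
  calc ‖x‖ ^ k * ‖iteratedFDeriv ℝ n (f.postcompCLM L) x‖
      = ‖x‖ ^ k * ‖(L.restrictScalars ℝ).compContinuousMultilinearMap
          (iteratedFDeriv ℝ n f x)‖ := by
        congr
        exact (L.restrictScalars ℝ).iteratedFDeriv_comp_left f.smooth'.contDiffAt
          (mod_cast le_top)
    _ ≤ ‖x‖ ^ k * (‖L‖ * ‖iteratedFDeriv ℝ n f x‖) := by
        gcongr
        exact (L.restrictScalars ℝ).norm_compContinuousMultilinearMap_le _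
    _ = ‖L‖ * (‖x‖ ^ k * ‖iteratedFDeriv ℝ n f x‖) := by ring
    _ ≤ ‖L‖ * SchwartzMap.seminorm ℝ k n f := by grw [le_seminorm ℝ k n f x]

variable [SMulCommClass ℝ 𝕜 G]

def postcompCLMFlip (f : 𝓢(E, F)) : (F →L[𝕜] G) →L[𝕜] 𝓢(E, G) :=
  let A : (F →L[𝕜] G) →ₗ[𝕜] 𝓢(E, G) :=
    { toFun L := f.postcompCLM L
      map_add' _ _ := by ext; simp
      map_smul' _ _ := by ext; simp }
  { A with
    cont := WithSeminorms.continuous_of_isBounded (norm_withSeminorms 𝕜 (F →L[𝕜] G))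
      (schwartz_withSeminorms 𝕜 E G) A <| (Seminorm.const_isBounded (Fin 1) A).2 fun ⟨k, n⟩ =>
        ⟨⟨_, apply_nonneg (SchwartzMap.seminorm 𝕜 k n) f⟩, fun L =>
          (seminorm_postcompCLM_le L f k n).trans_eq (mul_comm _ _)⟩ }

end SchwartzMap

section BanachSteinhaus

variable {𝕜 α E F : Type*} [NontriviallyNormedField 𝕜]
  [NormedAddCommGroup E] [NormedSpace 𝕜 E] [CompleteSpace E]
  [NormedAddCommGroup F] [NormedSpace 𝕜 F]

theorem exists_forall_norm_le_of_forall_norm_apply_le {S : Set α} (Z : α → E →L[𝕜] F)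
    (h : ∀ v, ∃ C, ∀ s ∈ S, ‖Z s v‖ ≤ C) : ∃ C, ∀ s ∈ S, ‖Z s‖ ≤ C :=
  let ⟨C, hC⟩ := banach_steinhaus (g := fun s : S => Z s) fun v =>
    (h v).imp fun _ hv s => hv s s.2
  ⟨C, fun s hs => hC ⟨s, hs⟩⟩

theorem IsCompact.exists_forall_norm_le_of_continuousOn_apply [TopologicalSpace α] {K : Set α}
    (hK : IsCompact K) {Z : α → E →L[𝕜] F} (hZ : ∀ v, ContinuousOn (fun s => Z s v) K) :
    ∃ C, ∀ s ∈ K, ‖Z s‖ ≤ C :=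
  exists_forall_norm_le_of_forall_norm_apply_le Z fun v => hK.exists_bound_of_continuousOn (hZ v)

end BanachSteinhaus

section WeaklyHolomorphic

variable {E F : Type*} [NormedAddCommGroup E] [NormedSpace ℂ E]
  [NormedAddCommGroup F] [NormedSpace ℂ F] {Z : ℂ → E →L[ℂ] F}

theorem norm_sub_le_of_differentiableOn_apply {c s : ℂ} {r M : ℝ}
    (hZ : ∀ v, DifferentiableOn ℂ (fun s => Z s v) (ball c r)) (hM : ∀ s ∈ ball c r, ‖Z s‖ ≤ M)
    (hs : s ∈ ball c r) : ‖Z s - Z c‖ ≤ 2 * M / r * dist s c := by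
  have hr : 0 < r := pos_of_mem_ball hs
  have hMc : ‖Z c‖ ≤ M := hM c (mem_ball_self hr)
  have hM0 : 0 ≤ M := (norm_nonneg _).trans hMc
  refine opNorm_le_bound _ (by positivity) fun v => ?_
  have hmaps : MapsTo (fun s => Z s v) (ball c r) (closedBall (Z c v) (2 * M * ‖v‖)) := by
    intro z hz
    rw [mem_closedBall, dist_eq_norm]
    calc ‖Z z v - Z c v‖ ≤ ‖Z z v‖ + ‖Z c v‖ := norm_sub_le _ _
      _ ≤ M * ‖v‖ + M * ‖v‖ :=
        add_le_add ((Z z).le_of_opNorm_le (hM z hz) v) ((Z c).le_of_opNorm_le hMc v)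
      _ = 2 * M * ‖v‖ := by ring
  calc ‖(Z s - Z c) v‖ = dist (Z s v) (Z c v) := by rw [dist_eq_norm, sub_apply]
    _ ≤ 2 * M * ‖v‖ / r * dist s c :=
      Complex.dist_le_div_mul_dist_of_mapsTo_ball (hZ v) hmaps hs
    _ = 2 * M / r * dist s c * ‖v‖ := by ring

theorem ContinuousLinearMap.circleIntegral_apply {g : ℂ → E →L[ℂ] F} {c : ℂ} {R : ℝ}
    (hg : CircleIntegrable g c R) (v : E) : (∮ z in C(c, R), g z) v = ∮ z in C(c, R), g z v := by
  simp only [circleIntegral, intervalIntegral_apply hg.out, smul_apply]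

variable [CompleteSpace E] {D : Set ℂ}

theorem continuousOn_of_differentiableOn_apply (hD : IsOpen D)
    (hZ : ∀ v, DifferentiableOn ℂ (fun s => Z s v) D) : ContinuousOn Z D := by
  intro c hc
  obtain ⟨r, hr, hrD⟩ := nhds_basis_closedBall.mem_iff.1 (hD.mem_nhds hc)
  obtain ⟨M, hM⟩ := (isCompact_closedBall c r).exists_forall_norm_le_of_continuousOn_apply
    fun v => (hZ v).continuousOn.mono hrD
  refine (continuousAt_of_locally_lipschitz hr (2 * M / r) fun s hs => ?_).continuousWithinAt
  rw [dist_eq_norm]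
  exact norm_sub_le_of_differentiableOn_apply
    (fun v => (hZ v).mono (ball_subset_closedBall.trans hrD))
    (fun s hs => hM s (ball_subset_closedBall hs)) hs

variable [CompleteSpace F]

theorem differentiableOn_of_differentiableOn_apply (hD : IsOpen D)
    (hZ : ∀ v, DifferentiableOn ℂ (fun s => Z s v) D) : DifferentiableOn ℂ Z D := by
  intro c hc
  obtain ⟨R, hR, hRD⟩ := nhds_basis_closedBall.mem_iff.1 (hD.mem_nhds hc)
  lift R to ℝ≥0 using hR.le
  have hZR : ContinuousOn Z (closedBall c R) :=
    (continuousOn_of_differentiableOn_apply hD hZ).mono hRD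
  have hW := hasFPowerSeriesOn_cauchy_integral
    ((hZR.mono sphere_subset_closedBall).circleIntegrable R.2) hR
  refine (hW.congr (g := Z) fun w hw => ext fun v => ?_).analyticAt.differentiableAt
    |>.differentiableWithinAt
  have hw : w ∈ ball c R := by simpa using hw
  have hint : CircleIntegrable (fun z => (z - w)⁻¹ • Z z) c R := by
    refine ContinuousOn.circleIntegrable R.2
      (ContinuousOn.fun_smul ?_ (hZR.mono sphere_subset_closedBall))
    refine (continuousOn_id.sub continuousOn_const).inv₀ fun z hz => sub_ne_zero.2 ?_
    rintro rfl
    exact (mem_ball.1 hw).ne (mem_sphere.1 hz)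
  have hZv : DiffContOnCl ℂ (fun s => Z s v) (ball c R) :=
    ((hZ v).mono (by rwa [closure_ball c hR.ne'])).diffContOnCl
  simp only [smul_apply, circleIntegral_apply hint]
  exact hZv.two_pi_i_inv_smul_circleIntegral_sub_inv_smul hw

end WeaklyHolomorphic

section FiniteOrder

variable {E V : Type*} [NormedAddCommGroup E] [NormedSpace ℂ E] [CompleteSpace E]
  [NormedAddCommGroup V] [NormedSpace ℝ V] {Z : ℂ → E →L[ℂ] ℂ} {D : Set ℂ} {d : ℝ}

theorem orderAtMostOn_norm_of_forall_apply (hZ : ∀ v, OrderAtMostOn D (fun s => Z s v) d) :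
    OrderAtMostOn D (fun s => (‖Z s‖ : ℂ)) d := by
  intro d' hd' a b
  obtain ⟨M, hM⟩ := exists_forall_norm_le_of_forall_norm_apply_le
    (S := {s ∈ D | a ≤ s.re ∧ s.re ≤ b}) (fun s => Real.exp (-(‖s‖ ^ d')) • Z s) fun v =>
      (hZ v d' hd' a b).imp fun M hM s ⟨hs, ha, hb⟩ => by
        simpa only [smul_apply, norm_smul, Real.norm_of_nonneg (Real.exp_pos _).le] using
          hM s hs ha hb
  refine ⟨M, fun s hs ha hb => ?_⟩
  simpa only [norm_smul, Real.norm_of_nonneg (Real.exp_pos _).le, Complex.norm_real,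
    norm_norm] using hM s ⟨hs, ha, hb⟩

theorem schwartzFiniteOrderOn_postcompCLM (hd : 0 < d)
    (hZ : ∀ v, OrderAtMostOn D (fun s => Z s v) d) (f : 𝓢(V, E)) :
    SchwartzFiniteOrderOn D (fun s => f.postcompCLM (Z s)) := by
  refine ⟨d, hd, fun d' hd' k n a b => ?_⟩
  obtain ⟨M, hM⟩ := orderAtMostOn_norm_of_forall_apply hZ d' hd' a b
  refine ⟨M * SchwartzMap.seminorm ℝ k n f, fun s hs ha hb => ?_⟩
  have hZs : Real.exp (-(‖s‖ ^ d')) * ‖Z s‖ ≤ M := by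
    simpa only [Complex.norm_real, norm_norm] using hM s hs ha hb
  calc Real.exp (-(‖s‖ ^ d')) * SchwartzMap.seminorm ℝ k n (f.postcompCLM (Z s))
      ≤ Real.exp (-(‖s‖ ^ d')) * (‖Z s‖ * SchwartzMap.seminorm ℝ k n f) := by
        gcongr; exact SchwartzMap.seminorm_postcompCLM_le (Z s) f k n
    _ = Real.exp (-(‖s‖ ^ d')) * ‖Z s‖ * SchwartzMap.seminorm ℝ k n f := by ring
    _ ≤ M * SchwartzMap.seminorm ℝ k n f := by gcongr

end FiniteOrder

theorem stmt3_general {E V : Type*}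
    [NormedAddCommGroup E] [NormedSpace ℂ E] [CompleteSpace E]
    [NormedAddCommGroup V] [NormedSpace ℝ V]
    (C d : ℝ) (hd : 0 < d)
    (Z : ℂ → E →L[ℂ] ℂ)
    (hZhol : ∀ v : E, DifferentiableOn ℂ (fun s => Z s v) {z : ℂ | C < z.re})
    (hZord : ∀ v : E, OrderAtMostOn {z : ℂ | C < z.re} (fun s => Z s v) d)
    (f : SchwartzMap V E) :
    ∃ G : ℂ → SchwartzMap V ℂ,
      (∀ s : ℂ, C < s.re → ∀ l : V, G s l = Z s (f l)) ∧
      ContinuousOn G {z : ℂ | C < z.re} ∧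
      (∀ u : SchwartzMap V ℂ →L[ℂ] ℂ,
        DifferentiableOn ℂ (fun s => u (G s)) {z : ℂ | C < z.re}) ∧
      SchwartzFiniteOrderOn {z : ℂ | C < z.re} G := by
  have hD : IsOpen {z : ℂ | C < z.re} := isOpen_lt continuous_const Complex.continuous_re
  have hZ : DifferentiableOn ℂ Z {z : ℂ | C < z.re} :=
    differentiableOn_of_differentiableOn_apply hD hZhol
  refine ⟨fun s => f.postcompCLMFlip (Z s), fun _ _ _ => rfl, ?_, fun u => ?_,
    schwartzFiniteOrderOn_postcompCLM hd hZord f⟩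
  · exact f.postcompCLMFlip.continuous.comp_continuousOn hZ.continuousOn
  · exact (u.comp f.postcompCLMFlip).differentiable.comp_differentiableOn hZ

/-- Banach case of the paper's Lemma on holomorphic families of functionals applied to
Schwartz functions: if `s ↦ Z_s ∈ E'` is a family of continuous linear functionals on a
right half-plane `H_{>C}`, holomorphic and of order at most `d` in vertical strips in
every orbit `s ↦ Z_s(v)`, then for every `E`-valued Schwartz function `f ∈ 𝒮(V, E)` the
function `λ ↦ Z_s(f(λ))` is Schwartz for each `s`, and the resulting Schwartz-space-valued
map is holomorphic (continuous and weakly holomorphic) and of finite order in vertical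
strips of the half-plane. -/
theorem stmt3 {E V : Type*}
    [NormedAddCommGroup E] [NormedSpace ℂ E] [CompleteSpace E]
    [NormedAddCommGroup V] [NormedSpace ℝ V] [FiniteDimensional ℝ V]
    (C d : ℝ) (hC : 0 < C) (hd : 0 < d)
    (Z : ℂ → E →L[ℂ] ℂ)
    (hZhol : ∀ v : E, DifferentiableOn ℂ (fun s => Z s v) {z : ℂ | C < z.re})
    (hZord : ∀ v : E, OrderAtMostOn {z : ℂ | C < z.re} (fun s => Z s v) d)
    (f : SchwartzMap V E) :
    ∃ G : ℂ → SchwartzMap V ℂ,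
      (∀ s : ℂ, C < s.re → ∀ l : V, G s l = Z s (f l)) ∧
      ContinuousOn G {z : ℂ | C < z.re} ∧
      (∀ u : SchwartzMap V ℂ →L[ℂ] ℂ,
        DifferentiableOn ℂ (fun s => u (G s)) {z : ℂ | C < z.re}) ∧
      SchwartzFiniteOrderOn {z : ℂ | C < z.re} G :=
  stmt3_general C d hd Z hZhol hZord f
end
end

section
/- Let M ⊆ ℂ be an open set, K a topological space, and F and E complex Banach spaces. Let s ↦ T_s be a family of continuous linear operators F → E indexed by s ∈ M such that for every f ∈ F the map s ↦ T_s(f) is holomorphic on M. Let (s,k) ↦ f_{s,k} ∈ F be a continuous map on M × K which is holomorphic in s for each fixed k ∈ K. Then the map (s,k) ↦ T_s(f_{s,k}) ∈ E is continuous on M × K and holomorphic in s for each fixed k ∈ K. -/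
/-!
By Banach–Steinhaus, a pointwise holomorphic family `s ↦ T s` is bounded in operator norm on
compact subsets of `M`. On a disc `ball c R` where `‖T s‖ ≤ C`, the Schwarz lemma applied to the
difference quotient of `s ↦ T s f` bounds its distance to the derivative at `c` by
`4 C ‖f‖ |z - c| / R²`, uniformly in `f`; so the difference quotients of `T` converge in operator
norm, and `T` is holomorphic in operator norm. Both conclusions then follow from the
composition rules for `T s (f s k)`.
-/

open Metric Set Filter Topology

section Schwarz

variable {E : Type*} [NormedAddCommGroup E] [NormedSpace ℂ E] {g : ℂ → E} {c z : ℂ} {R B : ℝ}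

theorem Complex.norm_dslope_le_of_forall_norm_le (hg : DifferentiableOn ℂ g (ball c R))
    (hB : ∀ w ∈ ball c R, ‖g w‖ ≤ B) (hz : z ∈ ball c R) :
    ‖dslope g c z‖ ≤ 2 * B / R := by
  have hc : c ∈ ball c R := mem_ball_self (pos_of_mem_ball hz)
  refine Complex.norm_dslope_le_div_of_mapsTo_ball hg (fun w hw ↦ ?_) hz
  rw [mem_closedBall, dist_eq_norm]
  linarith [norm_sub_le (g w) (g c), hB w hw, hB c hc]

theorem Complex.norm_dslope_sub_deriv_le_of_forall_norm_le [CompleteSpace E]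
    (hg : DifferentiableOn ℂ g (ball c R))
    (hB : ∀ w ∈ ball c R, ‖g w‖ ≤ B) (hz : z ∈ ball c R) :
    ‖dslope g c z - deriv g c‖ ≤ 4 * B / R ^ 2 * ‖z - c‖ := by
  have hR : 0 < R := pos_of_mem_ball hz
  have hdg : DifferentiableOn ℂ (dslope g c) (ball c R) :=
    (Complex.differentiableOn_dslope (ball_mem_nhds c hR)).2 hg
  have := Complex.dist_le_div_mul_dist_of_mapsTo_ball hdg (R₂ := 2 * (2 * B / R))
    (fun w hw ↦ ?_) hz
  · rw [dist_eq_norm, dist_eq_norm, dslope_same] at this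
    convert this using 2
    field_simp
    ring
  · have hc : c ∈ ball c R := mem_ball_self hR
    rw [mem_closedBall, dist_eq_norm]
    linarith [norm_sub_le (dslope g c w) (dslope g c c),
      Complex.norm_dslope_le_of_forall_norm_le hg hB hw,
      Complex.norm_dslope_le_of_forall_norm_le hg hB hc]

end Schwarz

section

variable {𝕜 X F E : Type*} [NontriviallyNormedField 𝕜] [TopologicalSpace X]
  [NormedAddCommGroup F] [NormedSpace 𝕜 F] [CompleteSpace F]
  [NormedAddCommGroup E] [NormedSpace 𝕜 E]

theorem IsCompact.exists_bound_of_continuousOn_apply {S : Set X} (hS : IsCompact S)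
    {T : X → F →L[𝕜] E} (hT : ∀ f, ContinuousOn (fun x ↦ T x f) S) :
    ∃ C, ∀ x ∈ S, ‖T x‖ ≤ C := by
  obtain ⟨C, hC⟩ := banach_steinhaus (g := fun x : S ↦ T x) fun f ↦ by
    obtain ⟨C, hC⟩ := hS.exists_bound_of_continuousOn (hT f)
    exact ⟨C, fun x ↦ hC x x.2⟩
  exact ⟨C, fun x hx ↦ hC ⟨x, hx⟩⟩

end

section

variable {F E : Type*} [NormedAddCommGroup F] [NormedSpace ℂ F] [CompleteSpace F]
  [NormedAddCommGroup E] [NormedSpace ℂ E] [CompleteSpace E]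

omit [CompleteSpace F] [CompleteSpace E] in
theorem ContinuousLinearMap.slope_apply (T : ℂ → F →L[ℂ] E) (c z : ℂ) (f : F) :
    slope T c z f = slope (fun s ↦ T s f) c z := by
  simp [slope_def_module]

theorem Complex.differentiableAt_of_forall_norm_le_of_differentiableOn_apply
    {T : ℂ → F →L[ℂ] E} {c : ℂ} {R C : ℝ} (hR : 0 < R) (hC : ∀ z ∈ ball c R, ‖T z‖ ≤ C)
    (hT : ∀ f, DifferentiableOn ℂ (fun s ↦ T s f) (ball c R)) :
    DifferentiableAt ℂ T c := by
  have hTc : ∀ f, HasDerivAt (fun s ↦ T s f) (deriv (fun s ↦ T s f) c) c := fun f ↦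
    ((hT f).differentiableAt (ball_mem_nhds c hR)).hasDerivAt
  have hpt : Tendsto (fun z f ↦ slope T c z f) (𝓝[≠] c) (𝓝 fun f ↦ deriv (fun s ↦ T s f) c) := by
    refine tendsto_pi_nhds.2 fun f ↦ ?_
    simpa only [ContinuousLinearMap.slope_apply] using hasDerivAt_iff_tendsto_slope.1 (hTc f)
  -- the pointwise derivative is a continuous operator by Banach–Steinhaus
  set D := continuousLinearMapOfTendsto (slope T c) hpt
  have hD : ∀ f, D f = deriv (fun s ↦ T s f) c := fun f ↦ rfl
  have hC₀ : 0 ≤ C := (norm_nonneg _).trans (hC c (mem_ball_self hR))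
  have hest : ∀ z ∈ ball c R, z ≠ c → ‖slope T c z - D‖ ≤ 4 * C / R ^ 2 * ‖z - c‖ := by
    intro z hz hzc
    refine ContinuousLinearMap.opNorm_le_bound _ (by positivity) fun f ↦ ?_
    have := Complex.norm_dslope_sub_deriv_le_of_forall_norm_le (hT f)
      (fun w hw ↦ (T w).le_of_opNorm_le (hC w hw) f) hz
    rw [sub_apply, ContinuousLinearMap.slope_apply, hD, ← dslope_of_ne _ hzc]
    convert this using 1
    ring
  refine ((hasDerivAt_iff_tendsto_slope (f' := D)).2 ?_).differentiableAt
  rw [tendsto_iff_norm_sub_tendsto_zero]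
  have hlim : Tendsto (fun z ↦ 4 * C / R ^ 2 * ‖z - c‖) (𝓝[≠] c) (𝓝 0) := by
    refine tendsto_nhdsWithin_of_tendsto_nhds ?_
    simpa using
      ((continuous_id.sub (continuous_const (y := c))).norm.const_mul (4 * C / R ^ 2)).tendsto c
  refine squeeze_zero' (Eventually.of_forall fun _ ↦ norm_nonneg _) ?_ hlim
  filter_upwards [inter_mem_nhdsWithin {c}ᶜ (ball_mem_nhds c hR)] with z hz
  exact hest z hz.2 hz.1

theorem Complex.differentiableOn_of_differentiableOn_apply {M : Set ℂ} (hM : IsOpen M)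
    {T : ℂ → F →L[ℂ] E} (hT : ∀ f, DifferentiableOn ℂ (fun s ↦ T s f) M) :
    DifferentiableOn ℂ T M := by
  intro c hc
  obtain ⟨R, hR, hRM⟩ := nhds_basis_closedBall.mem_iff.1 (hM.mem_nhds hc)
  obtain ⟨C, hC⟩ := (isCompact_closedBall c R).exists_bound_of_continuousOn_apply
    fun f ↦ (hT f).continuousOn.mono hRM
  exact (Complex.differentiableAt_of_forall_norm_le_of_differentiableOn_apply hR
    (fun z hz ↦ hC z (ball_subset_closedBall hz))
    fun f ↦ (hT f).mono (ball_subset_closedBall.trans hRM)).differentiableWithinAt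

end

/-- If `s ↦ T_s` is a pointwise-holomorphic family of continuous linear operators `F → E`
on an open set `M ⊆ ℂ` and `(s, k) ↦ f_{s,k} ∈ F` is continuous on `M × K` and
holomorphic in `s` for each fixed `k`, then `(s, k) ↦ T_s(f_{s,k})` is continuous on
`M × K` and holomorphic in `s` for each fixed `k` (Banach space case). -/
theorem stmt5 {F E : Type*}
    [NormedAddCommGroup F] [NormedSpace ℂ F] [CompleteSpace F]
    [NormedAddCommGroup E] [NormedSpace ℂ E] [CompleteSpace E]
    {K : Type*} [TopologicalSpace K]
    (M : Set ℂ) (hM : IsOpen M)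
    (T : ℂ → F →L[ℂ] E)
    (hT : ∀ f : F, DifferentiableOn ℂ (fun s => T s f) M)
    (f : ℂ → K → F)
    (hfc : ContinuousOn (fun p : ℂ × K => f p.1 p.2) (M ×ˢ (Set.univ : Set K)))
    (hfh : ∀ k : K, DifferentiableOn ℂ (fun s => f s k) M) :
    ContinuousOn (fun p : ℂ × K => T p.1 (f p.1 p.2)) (M ×ˢ (Set.univ : Set K)) ∧
    ∀ k : K, DifferentiableOn ℂ (fun s => T s (f s k)) M := by
  have hTM : DifferentiableOn ℂ T M := Complex.differentiableOn_of_differentiableOn_apply hM hT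
  refine ⟨?_, fun k ↦ hTM.clm_apply (hfh k)⟩
  exact (hTM.continuousOn.comp continuousOn_fst fun p hp ↦ hp.1).clm_apply hfc
end

section
/- Let M ⊆ ℂ be a connected open set, U ⊆ M a nonempty open subset, and F and E complex Banach spaces. For each s ∈ M let T_s : F → E be a linear map. Assume: (i) T_s is continuous for every s ∈ U; (ii) for every f ∈ F, the map s ↦ T_s(f) is holomorphic on M. Then T_s is a continuous linear map for every s ∈ M. -/
/-!
Near a point `c` around which the `T t` are continuous, Banach–Steinhaus on a small circle
about `c` bounds the `T w` uniformly there, so by Cauchy's estimates each Taylor coefficient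
`f ↦ ∂ⁿ (s ↦ T s f) c` is a continuous linear map. On any disc about `c` inside `M`, `T z` is
the pointwise sum of the Taylor series, hence continuous by Banach–Steinhaus again. Thus the
set of points near which the `T t` are continuous is open, relatively closed in `M`, and
contains `U`.
-/

open Metric Filter Topology
open scoped Nat

section

variable {𝕜 F E : Type*} [NontriviallyNormedField 𝕜] [NormedAddCommGroup F] [NormedSpace 𝕜 F]
  [NormedAddCommGroup E] [NormedSpace 𝕜 E]

theorem IsCompact.exists_bound_of_continuousOn_orbits [CompleteSpace F] {X : Type*}
    [TopologicalSpace X] {K : Set X} (hK : IsCompact K) (T : X → F →ₗ[𝕜] E)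
    (hT : ∀ x ∈ K, Continuous (T x)) (horb : ∀ f, ContinuousOn (fun x => T x f) K) :
    ∃ C, ∀ x ∈ K, ∀ f, ‖T x f‖ ≤ C * ‖f‖ := by
  let G : K → F →L[𝕜] E := fun x => ⟨T x, hT x x.2⟩
  obtain ⟨C, hC⟩ : ∃ C, ∀ x, ‖G x‖ ≤ C := banach_steinhaus fun f => by
    obtain ⟨C, hC⟩ := hK.exists_bound_of_continuousOn (horb f)
    exact ⟨C, fun x => hC x x.2⟩
  exact ⟨C, fun x hx f => (G ⟨x, hx⟩).le_of_opNorm_le (hC ⟨x, hx⟩) f⟩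

theorem LinearMap.continuous_of_hasSum [CompleteSpace F] (T : F →ₗ[𝕜] E) (g : ℕ → F →L[𝕜] E)
    (h : ∀ f, HasSum (fun n => g n f) (T f)) : Continuous T := by
  have hlim : Tendsto (fun N f => (∑ n ∈ Finset.range N, g n) f) atTop (𝓝 T) :=
    tendsto_pi_nhds.2 fun f => by simpa using (h f).tendsto_sum_nat
  exact (continuousLinearMapOfTendsto _ hlim).continuous

end

section

variable {F E : Type*} [NormedAddCommGroup F] [NormedSpace ℂ F]
  [NormedAddCommGroup E] [NormedSpace ℂ E]

noncomputable def iteratedDerivOrbitLinearMap (T : ℂ → F →ₗ[ℂ] E) (n : ℕ) (c : ℂ)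
    (hT : ∀ f, ContDiffAt ℂ n (fun s => T s f) c) : F →ₗ[ℂ] E where
  toFun f := iteratedDeriv n (fun s => T s f) c
  map_add' f g := by
    simp only [map_add]
    exact iteratedDeriv_fun_add (hT f) (hT g)
  map_smul' a f := by
    simp only [map_smul, RingHom.id_apply]
    exact iteratedDeriv_fun_const_smul (hT f) a

theorem continuous_iteratedDerivOrbitLinearMap [CompleteSpace F] [CompleteSpace E]
    (T : ℂ → F →ₗ[ℂ] E) (n : ℕ) {c : ℂ} {R : ℝ} (hR : 0 < R)
    (hT : ∀ f, ContDiffAt ℂ n (fun s => T s f) c)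
    (hcl : ∀ f, DiffContOnCl ℂ (fun s => T s f) (ball c R))
    (hsphere : ∀ w ∈ sphere c R, Continuous (T w)) :
    Continuous (iteratedDerivOrbitLinearMap T n c hT) := by
  obtain ⟨C, hC⟩ := (isCompact_sphere c R).exists_bound_of_continuousOn_orbits T hsphere
    fun f => (hcl f).continuousOn.mono <| by
      rw [closure_ball c hR.ne']
      exact sphere_subset_closedBall
  refine AddMonoidHomClass.continuous_of_bound _ (n ! * C / R ^ n) fun f => ?_
  calc ‖iteratedDeriv n (fun s => T s f) c‖ ≤ n ! * (C * ‖f‖) / R ^ n :=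
        Complex.norm_iteratedDeriv_le_of_forall_mem_sphere_norm_le n hR (hcl f)
          fun w hw => hC w hw f
    _ = n ! * C / R ^ n * ‖f‖ := by ring

theorem continuous_of_mem_ball_of_eventually_continuous [CompleteSpace F] [CompleteSpace E]
    (T : ℂ → F →ₗ[ℂ] E) {c : ℂ} {r : ℝ}
    (hT : ∀ f, DifferentiableOn ℂ (fun s => T s f) (ball c r))
    (hc : ∀ᶠ w in 𝓝 c, Continuous (T w)) {z : ℂ} (hz : z ∈ ball c r) :
    Continuous (T z) := by
  obtain ⟨ε, hε, hball⟩ := Metric.eventually_nhds_iff_ball.1 hc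
  have hr : 0 < r := pos_of_mem_ball hz
  set ρ := min (ε / 2) (r / 2)
  have hρ : 0 < ρ := by positivity
  have hρr : closedBall c ρ ⊆ ball c r :=
    closedBall_subset_ball ((min_le_right _ _).trans_lt (half_lt_self hr))
  have hρε : sphere c ρ ⊆ ball c ε := sphere_subset_closedBall.trans
    (closedBall_subset_ball ((min_le_left _ _).trans_lt (half_lt_self hε)))
  have hdiff : ∀ n f, ContDiffAt ℂ n (fun s => T s f) c := fun n f =>
    ((hT f).contDiffOn isOpen_ball).contDiffAt (isOpen_ball.mem_nhds (mem_ball_self hr))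
  let D n : F →L[ℂ] E := ⟨iteratedDerivOrbitLinearMap T n c (hdiff n),
    continuous_iteratedDerivOrbitLinearMap T n hρ (hdiff n)
      (fun f => (hT f).diffContOnCl_ball hρr) fun w hw => hball w (hρε hw)⟩
  exact (T z).continuous_of_hasSum (fun n => ((n ! : ℂ)⁻¹ * (z - c) ^ n) • D n)
    fun f => by simpa [D, iteratedDerivOrbitLinearMap, mul_smul] using
      Complex.hasSum_taylorSeries_on_ball (hT f) hz

theorem closure_setOf_eventually_continuous_inter_subset [CompleteSpace F] [CompleteSpace E]
    (T : ℂ → F →ₗ[ℂ] E) {M : Set ℂ} (hM : IsOpen M)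
    (hT : ∀ f, DifferentiableOn ℂ (fun s => T s f) M) :
    closure {s | ∀ᶠ t in 𝓝 s, Continuous (T t)} ∩ M ⊆ {s | ∀ᶠ t in 𝓝 s, Continuous (T t)} := by
  rintro s ⟨hs, hsM⟩
  obtain ⟨r, hr, hrM⟩ := Metric.isOpen_iff.1 hM s hsM
  obtain ⟨c, hc, hsc⟩ := Metric.mem_closure_iff.1 hs (r / 2) (half_pos hr)
  have hcM : ball c (r / 2) ⊆ M :=
    (ball_subset_ball' (by rw [dist_comm]; linarith)).trans hrM
  filter_upwards [isOpen_ball.mem_nhds (mem_ball.2 hsc)] with t ht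
  exact continuous_of_mem_ball_of_eventually_continuous T (fun f => (hT f).mono hcM) hc ht

end

/-- Analytic continuation of continuity for a pointwise-holomorphic family of linear maps
(Banach space case): if `T_s : F → E` is linear for every `s` in a connected open set
`M ⊆ ℂ`, continuous for `s` in a nonempty open subset `U ⊆ M`, and every orbit
`s ↦ T_s(f)` is holomorphic on `M`, then `T_s` is continuous for every `s ∈ M`. -/
theorem stmt6 {F E : Type*}
    [NormedAddCommGroup F] [NormedSpace ℂ F] [CompleteSpace F]
    [NormedAddCommGroup E] [NormedSpace ℂ E] [CompleteSpace E]
    (M U : Set ℂ) (hMopen : IsOpen M) (hMconn : IsConnected M)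
    (hUopen : IsOpen U) (hUsub : U ⊆ M) (hUne : U.Nonempty)
    (T : ℂ → F →ₗ[ℂ] E)
    (hTU : ∀ s ∈ U, Continuous (T s))
    (hThol : ∀ f : F, DifferentiableOn ℂ (fun s => T s f) M) :
    ∀ s ∈ M, Continuous (T s) := by
  obtain ⟨u, hu⟩ := hUne
  have hU : U ⊆ {s | ∀ᶠ t in 𝓝 s, Continuous (T t)} := fun s hs =>
    eventually_of_mem (hUopen.mem_nhds hs) hTU
  have hM : M ⊆ {s | ∀ᶠ t in 𝓝 s, Continuous (T t)} :=
    hMconn.isPreconnected.subset_of_closure_inter_subset isOpen_setOfPred_eventually_nhds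
      ⟨u, hUsub hu, hU hu⟩ (closure_setOf_eventually_continuous_inter_subset T hMopen hThol)
  exact fun s hs => (hM hs).self_of_nhds
end

section
/- Let M ⊆ ℂ be a connected open set, U ⊆ M a nonempty open subset, and E and F complex Banach spaces. For each s ∈ M let B_s : E × F → ℂ be a bilinear form. Assume: (i) B_s is separately continuous for every s ∈ U; (ii) for every (e,f) ∈ E × F, the map s ↦ B_s(e,f) is holomorphic on M. Then B_s is separately continuous for every s ∈ M. -/
open Metric Filter Topology Finset

noncomputable section

private lemma key_scalar {E : Type*} [NormedAddCommGroup E] [NormedSpace ℂ E] [CompleteSpace E]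
    {M U : Set ℂ} (hMopen : IsOpen M) (hMconn : IsConnected M)
    (hUopen : IsOpen U) (hUsub : U ⊆ M) (hUne : U.Nonempty)
    (φ : ℂ → E →ₗ[ℂ] ℂ)
    (hφU : ∀ s ∈ U, Continuous (φ s))
    (hφhol : ∀ e : E, DifferentiableOn ℂ (fun z => φ z e) M) :
    ∀ s ∈ M, Continuous (φ s) := by
  have hA : ∀ e : E, AnalyticOnNhd ℂ (fun z => φ z e) M :=
    fun e => (hφhol e).analyticOnNhd hMopen
  have hdiffIter : ∀ (e : E) (n : ℕ) (s : ℂ), s ∈ M →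
      DifferentiableAt ℂ (iteratedDeriv n (fun z => φ z e)) s := by
    intro e n s hs
    rw [iteratedDeriv_eq_iterate]
    exact ((hA e).iterated_deriv n s hs).differentiableAt
  -- Step 1: on any open set where `φ` is continuous, iterated `s`-derivatives are continuous
  -- linear functionals (Banach–Steinhaus applied to difference quotients).
  have hD : ∀ (n : ℕ) (V : Set ℂ), IsOpen V → V ⊆ M → (∀ t ∈ V, Continuous (φ t)) →
      ∀ s ∈ V, ∃ g : E →L[ℂ] ℂ, ∀ e, g e = iteratedDeriv n (fun z => φ z e) s := by
    intro n
    induction n with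
    | zero =>
      intro V _ _ hVc s hs
      exact ⟨⟨φ s, hVc s hs⟩, fun e => by simp⟩
    | succ n ih =>
      intro V hVo hVM hVc s hs
      obtain ⟨ε, hε, hball⟩ := Metric.isOpen_iff.1 hVo s hs
      set δ : ℕ → ℝ := fun k => ε / (2 * (k + 1)) with hδdef
      have hδpos : ∀ k, 0 < δ k := by
        intro k; apply div_pos hε; positivity
      have hδlt : ∀ k, δ k < ε := by
        intro k
        rw [hδdef, div_lt_iff₀ (by positivity)]
        nlinarith [hδpos k, (Nat.cast_nonneg k : (0:ℝ) ≤ k)]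
      have hδ0 : Tendsto δ atTop (𝓝 0) := by
        apply Tendsto.div_atTop (tendsto_const_nhds (x := ε))
        have h1 : Tendsto (fun k : ℕ => (k : ℝ) + 1) atTop atTop :=
          tendsto_atTop_add_const_right _ _ tendsto_natCast_atTop_atTop
        exact h1.const_mul_atTop two_pos
      set u : ℕ → ℂ := fun k => s + (δ k : ℂ) with hudef
      have humem : ∀ k, u k ∈ V := by
        intro k
        apply hball
        simp only [hudef, mem_ball, dist_self_add_left]
        rw [Complex.norm_real, Real.norm_of_nonneg (hδpos k).le]
        exact hδlt k
      have hune : ∀ k, u k ≠ s := by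
        intro k
        simp only [hudef, ne_eq, add_eq_left, Complex.ofReal_eq_zero]
        exact (hδpos k).ne'
      have hulim : Tendsto u atTop (𝓝[≠] s) := by
        apply tendsto_nhdsWithin_of_tendsto_nhds_of_eventually_within
        · have : Tendsto (fun k => ((δ k : ℝ) : ℂ)) atTop (𝓝 ((0:ℝ):ℂ)) :=
            (Complex.continuous_ofReal.tendsto _).comp hδ0
          simpa [hudef] using tendsto_const_nhds.add this
        · exact Eventually.of_forall fun k => hune k
      choose g hg using fun k => ih V hVo hVM hVc (u k) (humem k)
      obtain ⟨g0, hg0⟩ := ih V hVo hVM hVc s hs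
      set h : ℕ → E →L[ℂ] ℂ := fun k => (u k - s)⁻¹ • (g k - g0) with hhdef
      have hlim : Tendsto (fun k e => h k e) atTop
          (𝓝 fun e => iteratedDeriv (n + 1) (fun z => φ z e) s) := by
        rw [tendsto_pi_nhds]
        intro e
        have hds : DifferentiableAt ℂ (iteratedDeriv n (fun z => φ z e)) s :=
          hdiffIter e n s (hVM hs)
        have hd : HasDerivAt (iteratedDeriv n (fun z => φ z e))
            (iteratedDeriv (n + 1) (fun z => φ z e) s) s := by
          rw [iteratedDeriv_succ]
          exact hds.hasDerivAt
        have hslope := (hasDerivAt_iff_tendsto_slope.1 hd).comp hulim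
        convert hslope using 1
        funext k
        simp [hhdef, Function.comp, slope_def_field, hg, hg0, div_eq_inv_mul,
          slope, vsub_eq_sub, sub_smul]
      refine ⟨continuousLinearMapOfTendsto h hlim, fun e => rfl⟩
  -- Step 2: continuity propagates from a small open set to any ball inside `M` around
  -- a point of that set, via the Taylor series and Banach–Steinhaus.
  have key2 : ∀ (V : Set ℂ), IsOpen V → V ⊆ M → (∀ t ∈ V, Continuous (φ t)) →
      ∀ s₁ ∈ V, ∀ ρ : ℝ, ball s₁ ρ ⊆ M → ∀ s ∈ ball s₁ ρ, Continuous (φ s) := by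
    intro V hVo hVM hVc s₁ hs₁ ρ hρM s hs
    choose g hg using fun n => hD n V hVo hVM hVc s₁ hs₁
    set G : ℕ → E →L[ℂ] ℂ :=
      fun N => ∑ n ∈ Finset.range N, (((n.factorial : ℂ)⁻¹ * (s - s₁) ^ n) • g n) with hGdef
    have hlim : Tendsto (fun N e => G N e) atTop (𝓝 (φ s)) := by
      rw [tendsto_pi_nhds]
      intro e
      have hsum := Complex.hasSum_taylorSeries_on_ball ((hφhol e).mono hρM) hs
      have h2 := hsum.tendsto_sum_nat
      convert h2 using 1
      funext N
      simp only [hGdef, ContinuousLinearMap.sum_apply, ContinuousLinearMap.smul_apply, hg,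
        smul_eq_mul]
      exact Finset.sum_congr rfl fun x _ => by ring
    have : Continuous ⇑(continuousLinearMapOfTendsto G hlim) :=
      (continuousLinearMapOfTendsto G hlim).continuous
    exact this
  -- Step 3: connectedness argument.
  intro s hs
  have hW : M ⊆ interior {t | Continuous (φ t)} := by
    apply hMconn.isPreconnected.subset_of_closure_inter_subset isOpen_interior
    · obtain ⟨x, hx⟩ := hUne
      exact ⟨x, hUsub hx, interior_maximal (fun t ht => hφU t ht) hUopen hx⟩
    · rintro s₀ ⟨hcl, hs₀M⟩
      obtain ⟨r, hr, hballM⟩ := Metric.isOpen_iff.1 hMopen s₀ hs₀M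
      obtain ⟨s₁, hs₁W, hdist⟩ := Metric.mem_closure_iff.1 hcl (r / 2) (by linarith)
      set ρ : ℝ := r - dist s₀ s₁ with hρdef
      have hρpos : 0 < ρ := by
        have : dist s₀ s₁ < r := by linarith
        linarith
      have hρM : ball s₁ ρ ⊆ M := by
        intro t ht
        apply hballM
        rw [mem_ball] at ht ⊢
        calc dist t s₀ ≤ dist t s₁ + dist s₁ s₀ := dist_triangle _ _ _
          _ < ρ + dist s₁ s₀ := by linarith
          _ = r := by rw [hρdef, dist_comm s₁ s₀]; ring
      have hVc : ∀ t ∈ interior {t | Continuous (φ t)} ∩ ball s₁ ρ, Continuous (φ t) :=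
        fun t ht => interior_subset (s := {t | Continuous ⇑(φ t)}) ht.1
      have hcont := key2 _ (isOpen_interior.inter isOpen_ball)
        (fun t ht => hρM ht.2) hVc s₁ ⟨hs₁W, mem_ball_self hρpos⟩ ρ hρM
      have hball : ball s₁ ρ ⊆ {t | Continuous (φ t)} := fun t ht => hcont t ht
      exact interior_maximal hball isOpen_ball (by rw [mem_ball]; linarith)
  exact interior_subset (s := {t | Continuous ⇑(φ t)}) (hW hs)

/-- Analytic continuation of separate continuity for a pointwise-holomorphic family of
bilinear forms (Banach space case): if `B_s : E × F → ℂ` is bilinear for every `s` in a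
connected open set `M ⊆ ℂ`, separately continuous for `s` in a nonempty open subset
`U ⊆ M`, and every orbit `s ↦ B_s(e, f)` is holomorphic on `M`, then `B_s` is separately
continuous for every `s ∈ M`. -/
theorem stmt8 {E F : Type*}
    [NormedAddCommGroup E] [NormedSpace ℂ E] [CompleteSpace E]
    [NormedAddCommGroup F] [NormedSpace ℂ F] [CompleteSpace F]
    (M U : Set ℂ) (hMopen : IsOpen M) (hMconn : IsConnected M)
    (hUopen : IsOpen U) (hUsub : U ⊆ M) (hUne : U.Nonempty)
    (B : ℂ → E →ₗ[ℂ] F →ₗ[ℂ] ℂ)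
    (hBU : ∀ s ∈ U, (∀ f : F, Continuous fun e : E => B s e f) ∧
      (∀ e : E, Continuous fun f : F => B s e f))
    (hBhol : ∀ (e : E) (f : F), DifferentiableOn ℂ (fun s => B s e f) M) :
    ∀ s ∈ M, (∀ f : F, Continuous fun e : E => B s e f) ∧
      (∀ e : E, Continuous fun f : F => B s e f) := by
  intro s hs
  constructor
  · intro f
    exact key_scalar hMopen hMconn hUopen hUsub hUne (fun z => (B z).flip f)
      (fun t ht => (hBU t ht).1 f) (fun e => hBhol e f) s hs
  · intro e
    exact key_scalar hMopen hMconn hUopen hUsub hUne (fun z => B z e)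
      (fun t ht => (hBU t ht).2 e) (fun f => hBhol e f) s hs
end
end
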